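/- Let Γ be a reseminant graph. Then Γ is isomorphic to R̃_k for some integer k ≥ 0 if and only if Γ has at most one maximal K⁻_i induced subgraph with i ≥ 4. -/

import Mathlib

/-- The 5-cycle `C₅` on `Fin 5`. -/
def cycle5 : SimpleGraph (Fin 5) :=
  SimpleGraph.fromRel (fun i j => j = i + 1)

instance : DecidableRel cycle5.Adj := fun i j =>
  decidable_of_iff (i ≠ j ∧ (j = i + 1 ∨ i = j + 1)) Iff.rfl

/-- Duplicating the vertex `v'` of a simple graph `G`: a new vertex (the `Sum.inr` vertex) is
added, adjacent to `v'` and to every neighbor of `v'` in `G`. -/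
def dupGraph {V : Type*} (G : SimpleGraph V) (v' : V) : SimpleGraph (V ⊕ Unit) where
  Adj x y :=
    match x, y with
    | Sum.inl a, Sum.inl b => G.Adj a b
    | Sum.inl a, Sum.inr _ => a = v' ∨ G.Adj a v'
    | Sum.inr _, Sum.inl b => b = v' ∨ G.Adj b v'
    | Sum.inr _, Sum.inr _ => False
  symm := ⟨by
    rintro (a | a) (b | b) h
    · exact G.adj_symm h
    · exact h
    · exact h
    · exact h.elim⟩
  loopless := ⟨by
    rintro (a | a) h
    · exact G.irrefl h
    · exact h.elim⟩

instance dupGraphAdjDecidable {V : Type*} [DecidableEq V] (G : SimpleGraph V)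
    [DecidableRel G.Adj] (v' : V) : DecidableRel (dupGraph G v').Adj := fun x y =>
  match x, y with
  | Sum.inl a, Sum.inl b => inferInstanceAs (Decidable (G.Adj a b))
  | Sum.inl a, Sum.inr _ => inferInstanceAs (Decidable (a = v' ∨ G.Adj a v'))
  | Sum.inr _, Sum.inl b => inferInstanceAs (Decidable (b = v' ∨ G.Adj b v'))
  | Sum.inr _, Sum.inr _ => inferInstanceAs (Decidable False)

/-- The vertex type of the reseminant graph built from `C₅` by the duplications recorded in
the list `l` (each entry records which of the five original cycle vertices is duplicated). -/
def resemType : List (Fin 5) → Type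
  | [] => Fin 5
  | _ :: l => resemType l ⊕ Unit

instance resemTypeFintype : ∀ l : List (Fin 5), Fintype (resemType l)
  | [] => inferInstanceAs (Fintype (Fin 5))
  | _ :: l => letI := resemTypeFintype l; inferInstanceAs (Fintype (resemType l ⊕ Unit))

instance resemTypeDecEq : ∀ l : List (Fin 5), DecidableEq (resemType l)
  | [] => inferInstanceAs (DecidableEq (Fin 5))
  | _ :: l => letI := resemTypeDecEq l; inferInstanceAs (DecidableEq (resemType l ⊕ Unit))

/-- The copy, inside `resemType l`, of an original vertex of the 5-cycle. -/
def origVert : (l : List (Fin 5)) → Fin 5 → resemType l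
  | [], i => i
  | _ :: l, i => Sum.inl (origVert l i)

/-- The reseminant graph obtained from the 5-cycle `C₅` by the finite sequence of vertex
duplications recorded in `l`: for `l = v :: l'`, the vertex (the copy of the original cycle
vertex) `v` is duplicated in the graph built from `l'`. -/
def resemGraph : (l : List (Fin 5)) → SimpleGraph (resemType l)
  | [] => cycle5
  | v :: l => dupGraph (resemGraph l) (origVert l v)

instance resemGraphAdjDecidable : ∀ l : List (Fin 5), DecidableRel (resemGraph l).Adj
  | [] => inferInstanceAs (DecidableRel cycle5.Adj)
  | v :: l =>
    letI := resemGraphAdjDecidable l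
    inferInstanceAs (DecidableRel (dupGraph (resemGraph l) (origVert l v)).Adj)

/-- A simple graph is *reseminant* if it is (isomorphic to) a graph obtained from the 5-cycle
`C₅` by a finite sequence of vertex duplications, each duplicating one of the five original
cycle vertices. -/
def IsReseminant {V : Type*} (Γ : SimpleGraph V) : Prop :=
  ∃ l : List (Fin 5), Nonempty (Γ ≃g resemGraph l)

/-- `R̃_n`: the reseminant graph on `n + 5` vertices obtained from `C₅` by `n` successive
duplications, all duplicating the same fixed vertex `0` of the original 5-cycle. -/
def tildeR (n : ℕ) : SimpleGraph (resemType (List.replicate n 0)) :=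
  resemGraph (List.replicate n 0)

/-- The induced subgraph `Γ[s]` is isomorphic to `K⁻_{|s|}`, the complete graph on `|s|`
vertices with exactly one edge removed: there is a unique (unordered) pair of distinct
nonadjacent vertices in `s`, and all other pairs of distinct vertices of `s` are adjacent. -/
def IsKMinusOn {V : Type*} (Γ : SimpleGraph V) (s : Finset V) : Prop :=
  ∃ a ∈ s, ∃ b ∈ s, a ≠ b ∧ ¬Γ.Adj a b ∧
    ∀ x ∈ s, ∀ y ∈ s, x ≠ y → ¬Γ.Adj x y → (x = a ∧ y = b) ∨ (x = b ∧ y = a)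

/-- `Γ[s]` is a *maximal* `K⁻_{|s|}` induced subgraph of `Γ`: it is a `K⁻_{|s|}` induced
subgraph, and for every vertex `v` outside `s` the induced subgraph `Γ[s ∪ {v}]` is not a
`K⁻_{|s|+1}` induced subgraph. -/
def IsMaximalKMinusOn {V : Type*} [DecidableEq V] (Γ : SimpleGraph V) (s : Finset V) : Prop :=
  IsKMinusOn Γ s ∧ ∀ v ∉ s, ¬IsKMinusOn Γ (insert v s)
/-!
A reseminant graph is a blow-up of `C₅`: its vertex set splits into five nonempty cliques
`Q₀, …, Q₄` placed around the cycle, consecutive cliques completely joined and no other edges,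
`|Qᵢ| - 1` being the number of duplications of vertex `i`. Two blow-ups with the same clique
sizes are isomorphic. In a blow-up, the maximal `K⁻` sets with at least four vertices are
exactly the sets `Q_j ∪ {a, b}` with `|Q_j| ≥ 2`, `a ∈ Q_{j-1}` and `b ∈ Q_{j+1}`, and such a
set meets exactly the cliques `Q_{j-1}`, `Q_j`, `Q_{j+1}`, so it determines `j`. Hence `R̃_k`,
where only `Q₀` can be large while `Q₄` and `Q₁` are singletons, has at most one such set, two
large cliques give two different ones, and a blow-up with at most one large clique is a
rotation of some `R̃_k`.
-/

open Finset

def IsCycle5Blowup {V : Type*} (Γ : SimpleGraph V) (c : V → Fin 5) : Prop :=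
  ∀ u w, Γ.Adj u w ↔ u ≠ w ∧ (c u = c w ∨ cycle5.Adj (c u) (c w))

/- "Near" stands for `u = v ∨ cycle5.Adj u v`: the fibers over `u` and `v` of a blow-up are
completely joined exactly when `u` and `v` are near. -/

lemma cycle5_adj_sub_sub_iff : ∀ u w r : Fin 5, cycle5.Adj (u - r) (w - r) ↔ cycle5.Adj u w := by
  decide

lemma cycle5_exists_of_not_near : ∀ u v : Fin 5, ¬(u = v ∨ cycle5.Adj u v) →
    ∃ j, (u = j + 4 ∧ v = j + 1) ∨ (u = j + 1 ∧ v = j + 4) := by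
  decide

lemma cycle5_eq_of_near_of_near : ∀ j w : Fin 5, (w = j + 4 ∨ cycle5.Adj w (j + 4)) →
    (w = j + 1 ∨ cycle5.Adj w (j + 1)) → w = j := by
  decide

lemma cycle5_near_of_mem : ∀ j w : Fin 5, (w = j + 4 ∨ w = j ∨ w = j + 1) →
    j = w ∨ cycle5.Adj j w := by
  decide

lemma cycle5_not_near_of_mem : ∀ j u v : Fin 5, (u = j + 4 ∨ u = j ∨ u = j + 1) →
    (v = j + 4 ∨ v = j ∨ v = j + 1) → ¬(u = v ∨ cycle5.Adj u v) →
    (u = j + 4 ∧ v = j + 1) ∨ (u = j + 1 ∧ v = j + 4) := by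
  decide

lemma cycle5_not_near_add_four_add_one :
    ∀ j : Fin 5, ¬(j + 4 = j + 1 ∨ cycle5.Adj (j + 4) (j + 1)) := by
  decide

lemma fin_five_eq_of_triple_eq : ∀ i j : Fin 5,
    ({i + 4, i + 1, i} : Finset (Fin 5)) = {j + 4, j + 1, j} → i = j := by
  decide

namespace IsKMinusOn

variable {V : Type*} {Γ : SimpleGraph V} {s : Finset V} {a b x y : V}

lemma sym2_eq_of_not_adj (hs : IsKMinusOn Γ s) (ha : a ∈ s) (hb : b ∈ s) (hab : a ≠ b)
    (hnab : ¬Γ.Adj a b)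
    (hx : x ∈ s) (hy : y ∈ s) (hxy : x ≠ y) (hnxy : ¬Γ.Adj x y) : s(x, y) = s(a, b) := by
  obtain ⟨a₀, -, b₀, -, -, -, huniq⟩ := hs
  rw [Sym2.eq_iff.2 (huniq x hx y hy hxy hnxy), Sym2.eq_iff.2 (huniq a ha b hb hab hnab)]

lemma adj_of_ne (hs : IsKMinusOn Γ s) (ha : a ∈ s) (hb : b ∈ s) (hab : a ≠ b) (hnab : ¬Γ.Adj a b)
    (hx : x ∈ s) (hy : y ∈ s) (hxy : x ≠ y) (hxa : x ≠ a) (hxb : x ≠ b) : Γ.Adj x y := by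
  by_contra hnxy
  have hmem := hs.sym2_eq_of_not_adj ha hb hab hnab hx hy hxy hnxy ▸ Sym2.mem_mk_left x y
  exact (Sym2.mem_iff.1 hmem).elim hxa hxb

lemma insert_of_forall_adj [DecidableEq V] (hs : IsKMinusOn Γ s) {v : V}
    (hv : ∀ w ∈ s, Γ.Adj v w) : IsKMinusOn Γ (insert v s) := by
  obtain ⟨a, ha, b, hb, hab, hnab, huniq⟩ := hs
  refine ⟨a, mem_insert_of_mem ha, b, mem_insert_of_mem hb, hab, hnab, ?_⟩
  intro x hx y hy hxy hnxy
  rcases mem_insert.1 hx with rfl | hxs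
  · exact absurd (hv y ((mem_insert.1 hy).resolve_left hxy.symm)) hnxy
  rcases mem_insert.1 hy with rfl | hys
  · exact absurd (hv x hxs).symm hnxy
  exact huniq x hxs y hys hxy hnxy

end IsKMinusOn

namespace IsCycle5Blowup

variable {V W : Type*} {Γ : SimpleGraph V} {Δ : SimpleGraph W} {c : V → Fin 5} {a b : V}
  {j : Fin 5}

lemma sub_const (hc : IsCycle5Blowup Γ c) (r : Fin 5) : IsCycle5Blowup Γ (c · - r) := by
  intro u w
  rw [hc, sub_left_inj, cycle5_adj_sub_sub_iff]

lemma comp_iso {d : W → Fin 5} (hd : IsCycle5Blowup Δ d) (e : Γ ≃g Δ) :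
    IsCycle5Blowup Γ (d ∘ e) := by
  intro u w
  rw [← e.map_adj_iff, hd, Ne, e.apply_eq_iff_eq, Function.comp_apply, Function.comp_apply]

lemma not_adj_of_eq_add_four_of_eq_add_one (hc : IsCycle5Blowup Γ c)
    (hca : c a = j + 4) (hcb : c b = j + 1) : ¬Γ.Adj a b := fun h =>
  cycle5_not_near_add_four_add_one j (hca ▸ hcb ▸ ((hc a b).1 h).2)

lemma dupGraph (hc : IsCycle5Blowup Γ c) (v : V) :
    IsCycle5Blowup (dupGraph Γ v) (Sum.elim c fun _ => c v) := by
  rintro (a | a) (b | b)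
  · exact (hc a b).trans (by simp)
  · show a = v ∨ Γ.Adj a v ↔ _
    by_cases hav : a = v
    · simp [hav]
    · simp [hc a v, hav]
  · show b = v ∨ Γ.Adj b v ↔ _
    by_cases hbv : b = v
    · simp [hbv]
    · simp [hc b v, hbv, eq_comm, cycle5.adj_comm]
  · simp [_root_.dupGraph]

end IsCycle5Blowup

section Fintype

variable {V W : Type*} [Fintype V] [Fintype W]

lemma card_filter_comp_equiv (e : V ≃ W) (p : W → Prop) [DecidablePred p] :
    #{x | p (e x)} = #{y | p y} := by
  simp only [← Fintype.card_subtype]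
  exact Fintype.card_congr (e.subtypeEquiv fun _ => Iff.rfl)

lemma card_fiber_sumElim {β : Type*} [DecidableEq β] (c : V → β) (i j : β) :
    #{x : V ⊕ Unit | Sum.elim c (fun _ => j) x = i} = #{x | c x = i} + if j = i then 1 else 0 := by
  rw [card_filter, Fintype.sum_sum_type, ← card_filter]
  simp only [Sum.elim_inl, Sum.elim_inr, univ_unique, sum_singleton]
  rfl

lemma exists_isCycle5Blowup_resemGraph :
    ∀ l : List (Fin 5), ∃ c, IsCycle5Blowup (resemGraph l) c ∧ (∀ i, c (origVert l i) = i) ∧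
      ∀ i, #{x | c x = i} = l.count i + 1
  | [] => ⟨id, fun u w => ⟨fun h => ⟨h.ne, Or.inr h⟩, fun ⟨hne, h⟩ => h.resolve_left hne⟩,
      fun _ => rfl, by decide⟩
  | v :: l => by
    obtain ⟨c, hc, horig, hcard⟩ := exists_isCycle5Blowup_resemGraph l
    refine ⟨Sum.elim c fun _ => c (origVert l v), hc.dupGraph _, fun i => horig i, fun i => ?_⟩
    calc _ = #{x | c x = i} + if c (origVert l v) = i then 1 else 0 := card_fiber_sumElim c i _
      _ = _ := by
        rw [hcard, List.count_cons, horig]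
        simp only [beq_iff_eq]
        omega

lemma exists_isCycle5Blowup_of_iso {Γ : SimpleGraph V} {l : List (Fin 5)}
    (e : Γ ≃g resemGraph l) : ∃ c : V → Fin 5, IsCycle5Blowup Γ c ∧ Function.Surjective c ∧
      ∀ i, #{x | c x = i} = l.count i + 1 := by
  obtain ⟨d, hd, horig, hcard⟩ := exists_isCycle5Blowup_resemGraph l
  refine ⟨d ∘ e, hd.comp_iso e, fun i => ⟨e.symm (origVert l i), by simp [horig]⟩, fun i => ?_⟩
  rw [← hcard]
  exact card_filter_comp_equiv e.toEquiv (d · = i)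

section Fiber

variable [DecidableEq V] {c : V → Fin 5} {a b : V} {j : Fin 5}

lemma card_insert_insert_fiber (hca : c a = j + 4) (hcb : c b = j + 1) :
    #(insert a (insert b ({x | c x = j} : Finset V))) = #{x | c x = j} + 2 := by
  have hb : b ∉ ({x | c x = j} : Finset V) := by simp [hcb]
  have ha : a ∉ insert b ({x | c x = j} : Finset V) := by
    simp only [mem_insert, mem_filter, mem_univ, true_and, hca, not_or]
    refine ⟨?_, by simp⟩
    rintro rfl
    simp [hca] at hcb
  rw [card_insert_of_notMem ha, card_insert_of_notMem hb]

lemma image_insert_insert_fiber (hca : c a = j + 4) (hcb : c b = j + 1)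
    (hj : ({x | c x = j} : Finset V).Nonempty) :
    (insert a (insert b ({x | c x = j} : Finset V))).image c = {j + 4, j + 1, j} := by
  rw [image_insert, image_insert, hca, hcb,
    image_congr (g := fun _ => j) fun x hx => (mem_filter.1 hx).2, image_const hj]

end Fiber

namespace IsCycle5Blowup

variable {Γ : SimpleGraph V} {Δ : SimpleGraph W} {c : V → Fin 5}

lemma nonempty_iso {d : W → Fin 5} (hc : IsCycle5Blowup Γ c) (hd : IsCycle5Blowup Δ d)
    (hcard : ∀ i, #{x | c x = i} = #{y | d y = i}) : Nonempty (Γ ≃g Δ) := by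
  let f : V ≃ W := Equiv.ofFiberEquiv (f := c) (g := d) fun i => Fintype.equivOfCardEq <| by
    rw [Fintype.card_subtype, Fintype.card_subtype, hcard i]
  have hf : ∀ x, d (f x) = c x := Equiv.ofFiberEquiv_map _
  refine ⟨⟨f, fun {u w} => ?_⟩⟩
  rw [hd, hc, hf, hf, f.injective.ne_iff]

lemma nonempty_iso_tildeR (hc : IsCycle5Blowup Γ c) (i₀ : Fin 5) {k : ℕ}
    (hcard : ∀ i, #{x | c x = i} = if i = i₀ then k + 1 else 1) : Nonempty (Γ ≃g tildeR k) := by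
  obtain ⟨d, hd, -, hdcard⟩ := exists_isCycle5Blowup_resemGraph (List.replicate k 0)
  refine (hc.sub_const i₀).nonempty_iso hd fun i => ?_
  simp only [sub_eq_iff_eq_add, hcard, hdcard, List.count_replicate]
  rcases eq_or_ne i 0 with rfl | hi
  · simp
  · simp [hi, hi.symm]

variable [DecidableEq V] {s t : Finset V} {a b : V} {j : Fin 5}

lemma eq_insert_insert_fiber (hc : IsCycle5Blowup Γ c) (hs : IsMaximalKMinusOn Γ s)
    (ha : a ∈ s) (hb : b ∈ s) (hab : a ≠ b) (hnab : ¬Γ.Adj a b)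
    (hca : c a = j + 4) (hcb : c b = j + 1) :
    s = insert a (insert b ({x | c x = j} : Finset V)) := by
  have hmid : ∀ x ∈ s, x ≠ a → x ≠ b → c x = j := by
    intro x hx hxa hxb
    have hxa' := (hc x a).1 (hs.1.adj_of_ne ha hb hab hnab hx ha hxa hxa hxb)
    have hxb' := (hc x b).1 (hs.1.adj_of_ne ha hb hab hnab hx hb hxb hxa hxb)
    rw [hca] at hxa'
    rw [hcb] at hxb'
    exact cycle5_eq_of_near_of_near j _ hxa'.2 hxb'.2
  have hfiber : ∀ v, c v = j → v ∈ s := by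
    intro v hv
    by_contra hvs
    refine hs.2 v hvs (hs.1.insert_of_forall_adj fun w hw => (hc v w).2 ⟨?_, ?_⟩)
    · rintro rfl
      exact hvs hw
    · rw [hv]
      apply cycle5_near_of_mem
      by_cases hwa : w = a
      · exact Or.inl (hwa ▸ hca)
      by_cases hwb : w = b
      · exact Or.inr (Or.inr (hwb ▸ hcb))
      exact Or.inr (Or.inl (hmid w hw hwa hwb))
  ext x
  simp only [mem_insert, mem_filter, mem_univ, true_and]
  constructor
  · intro hx
    exact or_iff_not_imp_left.2 fun hxa => or_iff_not_imp_left.2 fun hxb => hmid x hx hxa hxb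
  · rintro (rfl | rfl | hx)
    exacts [ha, hb, hfiber x hx]

lemma exists_eq_insert_insert_fiber (hc : IsCycle5Blowup Γ c) (hs : IsMaximalKMinusOn Γ s) :
    ∃ j a b, c a = j + 4 ∧ c b = j + 1 ∧ s = insert a (insert b ({x | c x = j} : Finset V)) := by
  obtain ⟨a, ha, b, hb, hab, hnab, -⟩ := hs.1
  have hnear : ¬(c a = c b ∨ cycle5.Adj (c a) (c b)) := fun h => hnab ((hc a b).2 ⟨hab, h⟩)
  obtain ⟨j, ⟨hca, hcb⟩ | ⟨hca, hcb⟩⟩ := cycle5_exists_of_not_near _ _ hnear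
  · exact ⟨j, a, b, hca, hcb, hc.eq_insert_insert_fiber hs ha hb hab hnab hca hcb⟩
  · exact ⟨j, b, a, hcb, hca,
      hc.eq_insert_insert_fiber hs hb ha hab.symm (fun h => hnab h.symm) hcb hca⟩

lemma isKMinusOn_insert_insert_fiber (hc : IsCycle5Blowup Γ c)
    (hca : c a = j + 4) (hcb : c b = j + 1) :
    IsKMinusOn Γ (insert a (insert b ({x | c x = j} : Finset V))) := by
  set s := insert a (insert b ({x | c x = j} : Finset V))
  have hmem : ∀ x, x ∈ s ↔ x = a ∨ x = b ∨ c x = j := by simp [s]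
  have hclass : ∀ x ∈ s, c x = j + 4 ∨ c x = j ∨ c x = j + 1 := by
    intro x hx
    rcases (hmem x).1 hx with rfl | rfl | hx
    exacts [Or.inl hca, Or.inr (Or.inr hcb), Or.inr (Or.inl hx)]
  have ha_of : ∀ x ∈ s, c x = j + 4 → x = a := by
    intro x hx hcx
    rcases (hmem x).1 hx with rfl | rfl | hx
    · rfl
    · simp [hcb] at hcx
    · simp [hx] at hcx
  have hb_of : ∀ x ∈ s, c x = j + 1 → x = b := by
    intro x hx hcx
    rcases (hmem x).1 hx with rfl | rfl | hx
    · simp [hca] at hcx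
    · rfl
    · simp [hx] at hcx
  refine ⟨a, (hmem a).2 (Or.inl rfl), b, (hmem b).2 (Or.inr (Or.inl rfl)),
    ne_of_apply_ne c (by simp [hca, hcb]), hc.not_adj_of_eq_add_four_of_eq_add_one hca hcb,
    fun x hx y hy hxy hnxy => ?_⟩
  have hnear : ¬(c x = c y ∨ cycle5.Adj (c x) (c y)) := fun h => hnxy ((hc x y).2 ⟨hxy, h⟩)
  exact (cycle5_not_near_of_mem j _ _ (hclass x hx) (hclass y hy) hnear).imp
    (fun h => ⟨ha_of x hx h.1, hb_of y hy h.2⟩) (fun h => ⟨hb_of x hx h.1, ha_of y hy h.2⟩)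

lemma isMaximalKMinusOn_insert_insert_fiber (hc : IsCycle5Blowup Γ c)
    (hca : c a = j + 4) (hcb : c b = j + 1) :
    IsMaximalKMinusOn Γ (insert a (insert b ({x | c x = j} : Finset V))) := by
  set s := insert a (insert b ({x | c x = j} : Finset V))
  refine ⟨hc.isKMinusOn_insert_insert_fiber hca hcb, fun v hv hKv => hv ?_⟩
  have haS : a ∈ s := mem_insert_self a _
  have hbS : b ∈ s := mem_insert_of_mem (mem_insert_self b _)
  have hadj : ∀ w ∈ s, Γ.Adj v w := fun w hw =>
    hKv.adj_of_ne (mem_insert_of_mem haS) (mem_insert_of_mem hbS)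
      (ne_of_apply_ne c (by simp [hca, hcb])) (hc.not_adj_of_eq_add_four_of_eq_add_one hca hcb)
      (mem_insert_self v s) (mem_insert_of_mem hw) (fun h => hv (h ▸ hw))
      (fun h => hv (h ▸ haS)) (fun h => hv (h ▸ hbS))
  have hva := ((hc v a).1 (hadj a haS)).2
  have hvb := ((hc v b).1 (hadj b hbS)).2
  rw [hca] at hva
  rw [hcb] at hvb
  exact mem_insert_of_mem (mem_insert_of_mem
    (mem_filter.2 ⟨mem_univ v, cycle5_eq_of_near_of_near j _ hva hvb⟩))

lemma eq_of_isMaximalKMinusOn (hc : IsCycle5Blowup Γ c)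
    (hsmall : ∀ i ≠ 0, #{x | c x = i} ≤ 1) (hs4 : 4 ≤ #s) (ht4 : 4 ≤ #t)
    (hs : IsMaximalKMinusOn Γ s) (ht : IsMaximalKMinusOn Γ t) : s = t := by
  obtain ⟨j, a, b, hca, hcb, rfl⟩ := hc.exists_eq_insert_insert_fiber hs
  obtain ⟨j', a', b', hca', hcb', rfl⟩ := hc.exists_eq_insert_insert_fiber ht
  rw [card_insert_insert_fiber hca hcb] at hs4
  rw [card_insert_insert_fiber hca' hcb'] at ht4
  obtain rfl : j = 0 := by_contra fun h => by have := hsmall j h; omega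
  obtain rfl : j' = 0 := by_contra fun h => by have := hsmall j' h; omega
  obtain rfl : a = a' := card_le_one.1 (hsmall (0 + 4) (by decide)) a (by simpa using hca)
    a' (by simpa using hca')
  obtain rfl : b = b' := card_le_one.1 (hsmall (0 + 1) (by decide)) b (by simpa using hcb)
    b' (by simpa using hcb')
  rfl

lemma eq_of_two_le_card_fiber (hc : IsCycle5Blowup Γ c) (hsurj : Function.Surjective c)
    (H : ∀ s t : Finset V, 4 ≤ #s → 4 ≤ #t →
      IsMaximalKMinusOn Γ s → IsMaximalKMinusOn Γ t → s = t)
    {i j : Fin 5} (hi : 2 ≤ #{x | c x = i}) (hj : 2 ≤ #{x | c x = j}) : i = j := by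
  obtain ⟨a, ha⟩ := hsurj (i + 4)
  obtain ⟨b, hb⟩ := hsurj (i + 1)
  obtain ⟨a', ha'⟩ := hsurj (j + 4)
  obtain ⟨b', hb'⟩ := hsurj (j + 1)
  have hst := H _ _ (by rw [card_insert_insert_fiber ha hb]; omega)
    (by rw [card_insert_insert_fiber ha' hb']; omega)
    (hc.isMaximalKMinusOn_insert_insert_fiber ha hb)
    (hc.isMaximalKMinusOn_insert_insert_fiber ha' hb')
  have himage := congrArg (image c) hst
  rw [image_insert_insert_fiber ha hb (card_pos.1 (by omega)),
    image_insert_insert_fiber ha' hb' (card_pos.1 (by omega))] at himage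
  exact fin_five_eq_of_triple_eq i j himage

end IsCycle5Blowup

end Fintype

/-- Let `Γ` be a reseminant graph. Then `Γ` is isomorphic to `R̃_k` for some
integer `k ≥ 0` if and only if `Γ` has at most one maximal `K⁻_i` induced subgraph with
`i ≥ 4`. -/
theorem isomorphic_tildeR_iff_unique_maximal_KMinus {V : Type*} [Fintype V] [DecidableEq V]
    (Γ : SimpleGraph V) (h : IsReseminant Γ) :
    (∃ k : ℕ, Nonempty (Γ ≃g tildeR k)) ↔
      ∀ s t : Finset V, 4 ≤ s.card → 4 ≤ t.card →
        IsMaximalKMinusOn Γ s → IsMaximalKMinusOn Γ t → s = t := by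
  constructor
  · rintro ⟨k, ⟨e⟩⟩
    obtain ⟨c, hc, -, hcard⟩ := exists_isCycle5Blowup_of_iso e
    refine fun s t => hc.eq_of_isMaximalKMinusOn fun i hi => ?_
    simp [hcard, List.count_replicate, hi.symm]
  · intro H
    obtain ⟨l, ⟨e⟩⟩ := h
    obtain ⟨c, hc, hsurj, hcard⟩ := exists_isCycle5Blowup_of_iso e
    have hsupport : ∀ i j, l.count i ≠ 0 → l.count j ≠ 0 → i = j := fun i j hi hj =>
      hc.eq_of_two_le_card_fiber hsurj H (by rw [hcard]; omega) (by rw [hcard]; omega)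
    obtain ⟨i₀, hi₀⟩ : ∃ i₀, ∀ i ≠ i₀, l.count i = 0 := by
      by_cases hl : ∃ i₀, l.count i₀ ≠ 0
      · obtain ⟨i₀, h₀⟩ := hl
        exact ⟨i₀, fun i hi => by_contra fun h => hi (hsupport i i₀ h h₀)⟩
      · exact ⟨0, fun i _ => by_contra fun h => hl ⟨i, h⟩⟩
    refine ⟨l.count i₀, hc.nonempty_iso_tildeR i₀ fun i => ?_⟩
    rw [hcard]
    split_ifs with h
    · rw [h]
    · rw [hi₀ i h]
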